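/- arXiv:2508.10723 — 4 statements merged into one kernel-verified Lean document; each statement's English description precedes it below -/
import Mathlib

section
/- For any closed real 2-form B on M, the B-field transform exp(B) preserves the Courant bracket: exp(B)[e₁, e₂] = [exp(B)e₁, exp(B)e₂] for all sections e₁, e₂ of TM ⊕ T*M. -/
/-- An abstract Cartan calculus modelling the smooth functions `R = C^∞(M)`,
vector fields `X = Γ(TM)` (with their Lie bracket), and 1-forms `Ω = Ω¹(M)`
with the duality pairing, the de Rham differential on functions and the Lie
derivative on 1-forms, together with their standard identities. -/
structure CartanCalc (R X Ω : Type) [CommRing R] [AddCommGroup X] [Module R X]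
    [LieRing X] [AddCommGroup Ω] [Module R Ω] where
  /-- action of a vector field on a function -/
  act : X → R → R
  act_add_left : ∀ x y f, act (x + y) f = act x f + act y f
  act_smul_left : ∀ (g : R) (x : X) (f : R), act (g • x) f = g * act x f
  act_add_right : ∀ x f g, act x (f + g) = act x f + act x g
  act_mul : ∀ x f g, act x (f * g) = f * act x g + g * act x f
  act_bracket : ∀ x y f, act ⁅x, y⁆ f = act x (act y f) - act y (act x f)
  leibniz_bracket : ∀ (x : X) (f : R) (y : X), ⁅x, f • y⁆ = f • ⁅x, y⁆ + act x f • y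
  /-- the duality pairing between 1-forms and vector fields -/
  pair : Ω →ₗ[R] X →ₗ[R] R
  pair_sep : ∀ ω : Ω, (∀ x, pair ω x = 0) → ω = 0
  /-- the de Rham differential on functions -/
  d : R → Ω
  d_add : ∀ f g, d (f + g) = d f + d g
  d_mul : ∀ f g, d (f * g) = f • d g + g • d f
  pair_d : ∀ f x, pair (d f) x = act x f
  /-- the Lie derivative on 1-forms -/
  lie : X → Ω → Ω
  lie_pair : ∀ x ω y, pair (lie x ω) y = act x (pair ω y) - pair ω ⁅x, y⁆

variable {R X Ω : Type} [CommRing R] [AddCommGroup X] [Module R X]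
  [LieRing X] [AddCommGroup Ω] [Module R Ω]

/-- The canonical pairing `(X+ξ, Y+η) = ξ(Y) + η(X)` on `TM ⊕ T*M`. -/
def cpair (C : CartanCalc R X Ω) (a b : X × Ω) : R :=
  C.pair a.2 b.1 + C.pair b.2 a.1

variable [Algebra ℚ R]

/-- The Courant bracket `[X+ξ, Y+η] = [X,Y] + L_X η − L_Y ξ − (1/2) d(η(X) − ξ(Y))`. -/
def courant (C : CartanCalc R X Ω) (a b : X × Ω) : X × Ω :=
  (⁅a.1, b.1⁆,
    C.lie a.1 b.2 - C.lie b.1 a.2 -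
      algebraMap ℚ R (1/2) • C.d (C.pair b.2 a.1 - C.pair a.2 b.1))

/-- The B-field transform `exp(B) : X + ξ ↦ X + ξ + ι_X B`. -/
def expB (B : X →ₗ[R] Ω) (a : X × Ω) : X × Ω := (a.1, a.2 + B a.1)


namespace CartanCalc

variable {R X Ω : Type} [CommRing R] [AddCommGroup X] [Module R X]
  [LieRing X] [AddCommGroup Ω] [Module R Ω]

lemma act_zero (C : CartanCalc R X Ω) (x : X) : C.act x 0 = 0 := by
  have := C.act_add_right x 0 0
  simpa using this.symm

lemma act_neg (C : CartanCalc R X Ω) (x : X) (f : R) : C.act x (-f) = - C.act x f := by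
  have := C.act_add_right x f (-f)
  rw [add_neg_cancel, C.act_zero] at this
  linear_combination -this

lemma act_sub (C : CartanCalc R X Ω) (x : X) (f g : R) :
    C.act x (f - g) = C.act x f - C.act x g := by
  rw [sub_eq_add_neg, C.act_add_right, C.act_neg]; ring

lemma d_zero (C : CartanCalc R X Ω) : C.d 0 = 0 := by
  have := C.d_add 0 0
  simpa using this.symm

lemma d_neg (C : CartanCalc R X Ω) (f : R) : C.d (-f) = - C.d f := by
  have := C.d_add f (-f)
  rw [add_neg_cancel, C.d_zero] at this
  linear_combination (norm := abel) -this

lemma d_sub (C : CartanCalc R X Ω) (f g : R) : C.d (f - g) = C.d f - C.d g := by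
  rw [sub_eq_add_neg, C.d_add, C.d_neg, sub_eq_add_neg]

lemma lie_add (C : CartanCalc R X Ω) (x : X) (ω τ : Ω) :
    C.lie x (ω + τ) = C.lie x ω + C.lie x τ := by
  have h : C.lie x (ω + τ) - (C.lie x ω + C.lie x τ) = 0 := by
    apply C.pair_sep
    intro z
    simp [C.lie_pair, C.act_add_right]
    ring
  linear_combination (norm := abel) h

end CartanCalc

lemma Bfield_key {R X Ω : Type} [CommRing R] [AddCommGroup X] [Module R X]
    [LieRing X] [AddCommGroup Ω] [Module R Ω]
    (C : CartanCalc R X Ω) (B : X →ₗ[R] Ω)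
    (hskew : ∀ x y, C.pair (B x) y = - C.pair (B y) x)
    (hclosed : ∀ x y z,
      C.act x (C.pair (B y) z) - C.act y (C.pair (B x) z) + C.act z (C.pair (B x) y)
        - C.pair (B ⁅x, y⁆) z + C.pair (B ⁅x, z⁆) y - C.pair (B ⁅y, z⁆) x = 0)
    (x y : X) :
    B ⁅x, y⁆ = C.lie x (B y) - C.lie y (B x) + C.d (C.pair (B x) y) := by
  have h : B ⁅x, y⁆ - (C.lie x (B y) - C.lie y (B x) + C.d (C.pair (B x) y)) = 0 := by
    apply C.pair_sep
    intro z
    have hc := hclosed x y z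
    have h1 := hskew ⁅x, z⁆ y
    have h2 := hskew ⁅y, z⁆ x
    simp only [map_sub, map_add, LinearMap.sub_apply, LinearMap.add_apply,
      C.lie_pair, C.pair_d]
    linear_combination -hc + h1 - h2
  linear_combination (norm := abel) h

/-! STATEMENT 4: for a closed 2-form `B`, the B-field transform preserves the
Courant bracket: `exp(B)[e₁,e₂] = [exp(B)e₁, exp(B)e₂]`. -/
theorem B_field_transform_preserves_courant
    (C : CartanCalc R X Ω) (B : X →ₗ[R] Ω)
    (hskew : ∀ x y, C.pair (B x) y = - C.pair (B y) x)
    (hclosed : ∀ x y z,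
      C.act x (C.pair (B y) z) - C.act y (C.pair (B x) z) + C.act z (C.pair (B x) y)
        - C.pair (B ⁅x, y⁆) z + C.pair (B ⁅x, z⁆) y - C.pair (B ⁅y, z⁆) x = 0) :
    ∀ e₁ e₂ : X × Ω, expB B (courant C e₁ e₂) = courant C (expB B e₁) (expB B e₂) := by
  rintro ⟨x, ξ⟩ ⟨y, η⟩
  have key := Bfield_key C B hskew hclosed x y
  have hq : (algebraMap ℚ R (1/2)) • (C.d (C.pair (B x) y) + C.d (C.pair (B x) y))
      = C.d (C.pair (B x) y) := by
    rw [← two_smul R (C.d (C.pair (B x) y)), smul_smul]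
    have : (algebraMap ℚ R (1/2)) * 2 = 1 := by
      rw [show (2 : R) = algebraMap ℚ R 2 from (map_ofNat _ 2).symm, ← map_mul]
      norm_num
    rw [this, one_smul]
  unfold expB courant
  rw [Prod.mk.injEq]
  refine ⟨rfl, ?_⟩
  have hpd : C.pair (η + B y) x - C.pair (ξ + B x) y
      = (C.pair η x - C.pair ξ y) + (- C.pair (B x) y - C.pair (B x) y) := by
    simp only [map_add, LinearMap.add_apply]
    linear_combination hskew y x
  rw [hpd, C.d_add, smul_add, C.lie_add, C.lie_add, key]
  have hd2 : C.d (-C.pair (B x) y - C.pair (B x) y)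
      = -(C.d (C.pair (B x) y) + C.d (C.pair (B x) y)) := by
    rw [sub_eq_add_neg, C.d_add, C.d_neg]; abel
  rw [hd2, smul_neg, hq]
  abel_nf
  simp only [add_assoc]
end

section
/- The Čech 1-cochain α_E = {U_{ij}, φⱼ⁻¹ ∘ (φ_{ij}⁻¹ d₊(φ_{ij})) ∘ φⱼ} associated to the trivializations of a generalized holomorphic vector bundle E is a Čech 1-cocycle with values in G*M ⊗ End(E), and its cohomology class is independent of the choice of local trivializations. -/
section

variable {r : ℕ} {R Ω : Type} [CommRing R] [AddCommGroup Ω] [Module R Ω]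

/-- Apply the differential `d₊` entrywise to a matrix of functions. -/
def matD (d : R → Ω) (A : Matrix (Fin r) (Fin r) R) : Matrix (Fin r) (Fin r) Ω :=
  fun a b => d (A a b)

/-- Product of a matrix of functions with a matrix of 1-forms. -/
def mulRM (A : Matrix (Fin r) (Fin r) R) (B : Matrix (Fin r) (Fin r) Ω) :
    Matrix (Fin r) (Fin r) Ω :=
  fun a c => ∑ b, A a b • B b c

/-- Product of a matrix of 1-forms with a matrix of functions. -/
def mulMR (B : Matrix (Fin r) (Fin r) Ω) (A : Matrix (Fin r) (Fin r) R) :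
    Matrix (Fin r) (Fin r) Ω :=
  fun a c => ∑ b, A b c • B a b


namespace AtiyahAux

lemma mulRM_assoc (A B : Matrix (Fin r) (Fin r) R) (X : Matrix (Fin r) (Fin r) Ω) :
    mulRM (A * B) X = mulRM A (mulRM B X) := by
  funext a c
  simp only [mulRM, Matrix.mul_apply, Finset.sum_smul, Finset.smul_sum, mul_smul]
  exact Finset.sum_comm

lemma mulMR_assoc (X : Matrix (Fin r) (Fin r) Ω) (A B : Matrix (Fin r) (Fin r) R) :
    mulMR X (A * B) = mulMR (mulMR X A) B := by
  funext a c
  simp only [mulMR, Matrix.mul_apply, Finset.sum_smul, Finset.smul_sum, mul_smul]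
  rw [Finset.sum_comm]
  refine Finset.sum_congr rfl fun b _ => Finset.sum_congr rfl fun e _ => ?_
  rw [smul_comm]

lemma mulRM_mulMR (A : Matrix (Fin r) (Fin r) R) (X : Matrix (Fin r) (Fin r) Ω)
    (B : Matrix (Fin r) (Fin r) R) :
    mulRM A (mulMR X B) = mulMR (mulRM A X) B := by
  funext a c
  simp only [mulRM, mulMR, Finset.smul_sum]
  rw [Finset.sum_comm]
  refine Finset.sum_congr rfl fun b _ => Finset.sum_congr rfl fun e _ => ?_
  rw [smul_comm]

lemma mulRM_add (A : Matrix (Fin r) (Fin r) R) (X Y : Matrix (Fin r) (Fin r) Ω) :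
    mulRM A (X + Y) = mulRM A X + mulRM A Y := by
  funext a c
  simp [mulRM, smul_add, Finset.sum_add_distrib]

lemma mulRM_one (X : Matrix (Fin r) (Fin r) Ω) : mulRM (1 : Matrix (Fin r) (Fin r) R) X = X := by
  funext a c
  simp [mulRM, Matrix.one_apply, ite_smul]

lemma mulMR_one (X : Matrix (Fin r) (Fin r) Ω) : mulMR X (1 : Matrix (Fin r) (Fin r) R) = X := by
  funext a c
  simp [mulMR, Matrix.one_apply, ite_smul]

section
variable (d : R → Ω) (hd_add : ∀ f g : R, d (f + g) = d f + d g)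
    (hd_mul : ∀ f g : R, d (f * g) = f • d g + g • d f)

include hd_add hd_mul

omit hd_mul [Module R Ω] in
lemma d_zero : d 0 = 0 := by
  have h := hd_add 0 0
  simp only [add_zero] at h
  exact (left_eq_add.mp h)

omit hd_add in
lemma d_one : d 1 = 0 := by
  have h := hd_mul 1 1
  simp only [mul_one, one_smul] at h
  exact (left_eq_add.mp h)

lemma matD_one : matD d (1 : Matrix (Fin r) (Fin r) R) = 0 := by
  funext a c
  simp only [matD, Matrix.one_apply]
  split
  · exact d_one d hd_mul
  · exact d_zero d hd_add

lemma matD_mul (A B : Matrix (Fin r) (Fin r) R) :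
    matD d (A * B) = mulRM A (matD d B) + mulMR (matD d A) B := by
  funext a c
  have : d (∑ b, A a b * B b c) = ∑ b, d (A a b * B b c) :=
    map_sum (AddMonoidHom.mk' d hd_add) _ _
  simp only [matD, Matrix.mul_apply, Matrix.add_apply, mulRM, mulMR, this]
  rw [← Finset.sum_add_distrib]
  exact Finset.sum_congr rfl fun b _ => hd_mul _ _

end

end AtiyahAux

open AtiyahAux

/-! STATEMENT 14: the Čech 1-cochain
`α_E = {U_{ij}, φⱼ⁻¹ ∘ (φ_{ij}⁻¹ d₊(φ_{ij})) ∘ φⱼ}` associated to the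
trivializations of a generalized holomorphic vector bundle `E` is a Čech
1-cocycle with values in (the sheaf of generalized holomorphic sections of)
`G*M ⊗ End(E)`, and its cohomology class is independent of the choice of local
trivializations.

Model: `R` is the ring of smooth complex-valued functions, with subring `O` of
generalized holomorphic functions; `Ω` models the sections of `G*M`, with the
subgroup `W` of generalized holomorphic sections, stable under multiplication
by `O` and containing `d₊f` for `f ∈ O`.  The bundle `E` is presented by its
generalized holomorphic transition cocycle `g i j` (matrices over `R` with
entries in `O`), and a section of `G*M ⊗ End(E)` on `U_{ij}` is recorded by
its matrix in the `j`-th frame, so that `α_E` becomes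
`β i j = (g i j)⁻¹ ⬝ d₊(g i j) = g j i ⬝ d₊(g i j)`.  The Čech cocycle
condition, written in the common `k`-th frame on `U_{ijk}`, reads
`β j k − β i k + (g j k)⁻¹ β i j (g j k) = 0`.  A second choice of
trivializations corresponds to a generalized holomorphic gauge `u i`, giving
transition matrices `g' i j = u i ⬝ g i j ⬝ (u j)⁻¹` and Atiyah cochain `β'`;
independence of the class means `β'` and (the transport of) `β` differ by the
Čech coboundary of a 0-cochain `c` of generalized holomorphic sections of
`G*M ⊗ End(E)`. -/
theorem atiyah_cochain_is_cocycle_and_class_independent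
    {ι : Type}
    (d : R → Ω)
    (hd_add : ∀ f g, d (f + g) = d f + d g)
    (hd_mul : ∀ f g, d (f * g) = f • d g + g • d f)
    (O : Subring R) (W : AddSubgroup Ω)
    (hsmulW : ∀ f ∈ O, ∀ ω ∈ W, f • ω ∈ W)
    (hdW : ∀ f ∈ O, d f ∈ W)
    (g : ι → ι → Matrix (Fin r) (Fin r) R)
    (hgGH : ∀ i j a b, g i j a b ∈ O)
    (hgcoc : ∀ i j k, g i j * g j k = g i k)
    (hgid : ∀ i, g i i = 1)
    (u uinv : ι → Matrix (Fin r) (Fin r) R)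
    (huGH : ∀ i a b, u i a b ∈ O) (huinvGH : ∀ i a b, uinv i a b ∈ O)
    (hu : ∀ i, u i * uinv i = 1) (hu' : ∀ i, uinv i * u i = 1) :
    -- α_E is a Čech 1-cocycle valued in GH sections of G*M ⊗ End(E):
    ((∀ i j a b, mulRM (g j i) (matD d (g i j)) a b ∈ W) ∧
      (∀ i j k,
        mulRM (g k j) (matD d (g j k)) - mulRM (g k i) (matD d (g i k)) +
          mulMR (mulRM (g k j) (mulRM (g j i) (matD d (g i j)))) (g j k) = 0)) ∧
    -- the class does not depend on the trivializations:
    (∃ c : ι → Matrix (Fin r) (Fin r) Ω,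
      (∀ i a b, c i a b ∈ W) ∧
      ∀ i j,
        mulRM ((u j * g j i * uinv i)) (matD d (u i * g i j * uinv j)) -
            mulMR (mulRM (u j) (mulRM (g j i) (matD d (g i j)))) (uinv j) =
          mulMR (mulRM ((u j * g j i * uinv i)) (c i)) (u i * g i j * uinv j) - c j) := by
  have hDmul := matD_mul (r := r) d hd_add hd_mul
  have hmem : ∀ (A : Matrix (Fin r) (Fin r) R) (X : Matrix (Fin r) (Fin r) Ω),
      (∀ a b, A a b ∈ O) → (∀ a b, X a b ∈ W) → ∀ a b, mulRM A X a b ∈ W := by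
    intro A X hA hX a b
    exact AddSubgroup.sum_mem W fun c _ => hsmulW _ (hA a c) _ (hX c b)
  have hmem' : ∀ (X : Matrix (Fin r) (Fin r) Ω) (A : Matrix (Fin r) (Fin r) R),
      (∀ a b, X a b ∈ W) → (∀ a b, A a b ∈ O) → ∀ a b, mulMR X A a b ∈ W := by
    intro X A hX hA a b
    exact AddSubgroup.sum_mem W fun c _ => hsmulW _ (hA c b) _ (hX a c)
  refine ⟨⟨?_, ?_⟩, ?_⟩
  · intro i j a b
    exact hmem _ _ (hgGH j i) (fun a b => hdW _ (hgGH i j a b)) a b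
  · intro i j k
    have h1 : matD d (g i k) = mulRM (g i j) (matD d (g j k)) + mulMR (matD d (g i j)) (g j k) := by
      rw [← hgcoc i j k]; exact hDmul _ _
    have h2 : mulRM (g k i) (matD d (g i k)) =
        mulRM (g k j) (matD d (g j k)) +
          mulMR (mulRM (g k j) (mulRM (g j i) (matD d (g i j)))) (g j k) := by
      rw [h1, mulRM_add, ← mulRM_assoc, hgcoc k i j, mulRM_mulMR, ← hgcoc k j i, mulRM_assoc]
    rw [h2]; abel
  · refine ⟨fun i => mulMR (matD d (u i)) (uinv i), ?_, ?_⟩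
    · intro i a b
      exact hmem' _ _ (fun a b => hdW _ (huGH i a b)) (huinvGH i) a b
    · intro i j
      have key : mulRM (u j) (matD d (uinv j)) = - mulMR (matD d (u j)) (uinv j) := by
        have h := hDmul (u j) (uinv j)
        rw [hu j, matD_one d hd_add hd_mul] at h
        rw [eq_neg_iff_add_eq_zero]; exact h.symm
      have hPA : (u j * g j i * uinv i) * u i = u j * g j i := by
        rw [mul_assoc, hu' i, mul_one]
      have hPAB : (u j * g j i * uinv i) * (u i * g i j) = u j := by
        rw [← mul_assoc, hPA, mul_assoc, hgcoc j i j, hgid j, mul_one]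
      have hQexp : matD d (u i * g i j * uinv j) =
          mulRM (u i * g i j) (matD d (uinv j)) +
            mulMR (mulRM (u i) (matD d (g i j)) + mulMR (matD d (u i)) (g i j)) (uinv j) := by
        rw [hDmul (u i * g i j) (uinv j), hDmul (u i) (g i j)]
      have hmulMR_add : ∀ (X Y : Matrix (Fin r) (Fin r) Ω) (B : Matrix (Fin r) (Fin r) R),
          mulMR (X + Y) B = mulMR X B + mulMR Y B := by
        intro X Y B; funext a c
        simp [mulMR, smul_add, Finset.sum_add_distrib]
      have hLHS : mulRM (u j * g j i * uinv i) (matD d (u i * g i j * uinv j)) =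
          mulRM (u j) (matD d (uinv j)) +
            (mulMR (mulRM (u j) (mulRM (g j i) (matD d (g i j)))) (uinv j) +
              mulMR (mulMR (mulRM (u j * g j i * uinv i) (matD d (u i))) (g i j)) (uinv j)) := by
        rw [hQexp, mulRM_add, hmulMR_add, mulRM_add]
        congr 1
        · rw [← mulRM_assoc, hPAB]
        congr 1
        · rw [mulRM_mulMR, ← mulRM_assoc, hPA, mulRM_assoc]
        · rw [mulRM_mulMR, mulRM_mulMR]
      have hRHS : mulMR (mulRM (u j * g j i * uinv i) (mulMR (matD d (u i)) (uinv i)))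
            (u i * g i j * uinv j) =
          mulMR (mulMR (mulRM (u j * g j i * uinv i) (matD d (u i))) (g i j)) (uinv j) := by
        rw [mulRM_mulMR, ← mulMR_assoc, ← mulMR_assoc]
        congr 1
        rw [← mul_assoc, ← mul_assoc, hu' i, one_mul]
      rw [hLHS, hRHS, key]
      abel


end
end

section
/- For a Lie pair (L, A) with quotient B = L/A and an A-module E, a splitting j: B → L of the projection q: L → B determines a splitting ζ of the jet sequence of sections which satisfies ζ(fe) = f ζ(e) + κ((q* j* ρ_L*(df)) ⊗ e) for every smooth function f and section e of E. -/
/-- An abstract (complex) Lie algebroid `L` over the commutative `ℂ`-algebra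
`R` of smooth complex-valued functions. -/
structure LieAlgebroidStr (R L : Type) [CommRing R] [AddCommGroup L] [Module R L]
    [LieRing L] where
  /-- the anchor `ρ_L`, acting on functions -/
  ρ : L → R → R
  ρ_add_left : ∀ x y f, ρ (x + y) f = ρ x f + ρ y f
  ρ_smul_left : ∀ (g : R) (x : L) (f : R), ρ (g • x) f = g * ρ x f
  ρ_add_right : ∀ x f g, ρ x (f + g) = ρ x f + ρ x g
  ρ_mul : ∀ x f g, ρ x (f * g) = f * ρ x g + g * ρ x f
  ρ_bracket : ∀ x y f, ρ ⁅x, y⁆ f = ρ x (ρ y f) - ρ y (ρ x f)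
  leibniz_bracket : ∀ (x : L) (f : R) (y : L), ⁅x, f • y⁆ = f • ⁅x, y⁆ + ρ x f • y

section

variable {R L E : Type} [CommRing R] [AddCommGroup L] [Module R L] [LieRing L]
  [AddCommGroup E] [Module R E]

/-- Given a Lie pair `(L, A)`, an `A`-module `E` with `A`-connection `conn`,
and a splitting `j : B = L/A → L` of the projection `q = A.mkQ`, this is the
`ℂ`-linear map `D^{ζ(e)} : Γ(E*) → Γ(L*)` of the jet-section `ζ(e) = (D^{ζ(e)}, e)`
determined by the splitting: it satisfies `⟨D^{ζ(e)}(ε), a⟩ = ⟨∇_a ε, e⟩` for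
`a ∈ Γ(A)` and `⟨D^{ζ(e)}(ε), j(b)⟩ = ρ(j(b))⟨ε, e⟩` for `b ∈ Γ(B)`. -/
def Dzeta (G : LieAlgebroidStr R L) (A : Submodule R L)
    (conn : A → E → E) (j : (L ⧸ A) →ₗ[R] L) (hj : ∀ b, A.mkQ (j b) = b)
    (e : E) : Module.Dual R E → L → R :=
  fun ε l =>
    G.ρ l (ε e) -
      ε (conn ⟨l - j (A.mkQ l), by
        have h1 : A.mkQ (l - j (A.mkQ l)) = 0 := by rw [map_sub, hj, sub_self]
        rwa [Submodule.mkQ_apply, Submodule.Quotient.mk_eq_zero] at h1⟩ e)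

/-- The splitting `ζ` of the jet sequence at the level of sections: a section
of the jet bundle `𝒥¹_{L/A}E` is a pair `(D, e)` with `D : Γ(E*) → Γ(L*)`. -/
def zetaJet (G : LieAlgebroidStr R L) (A : Submodule R L)
    (conn : A → E → E) (j : (L ⧸ A) →ₗ[R] L) (hj : ∀ b, A.mkQ (j b) = b)
    (e : E) : (Module.Dual R E → L → R) × E :=
  (Dzeta G A conn j hj e, e)

/-- The inclusion `κ : Γ(A^⊥ ⊗ E) → Γ(𝒥¹_{L/A}E)`, `κ(ω ⊗ e) = (ε ↦ ⟨ε, e⟩ ω, 0)`. -/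
def kappaJet (ω : L → R) (e : E) : (Module.Dual R E → L → R) × E :=
  (fun ε l => ε e * ω l, 0)

/-! STATEMENT 15: for a Lie pair `(L, A)` with quotient `B = L/A` and an
`A`-module `E`, a splitting `j : B → L` of the projection `q : L → B`
determines a splitting `ζ` of the short exact sequence of sections of the jet
bundle, which satisfies
`ζ(f e) = f ζ(e) + κ((q* j* ρ_L*(df)) ⊗ e)`
for every smooth function `f` and every section `e` of `E`.
(Here `(q* j* ρ_L*(df))(l) = ρ_L(j(q(l))) f`.) -/
theorem jet_splitting_leibniz_formula
    (G : LieAlgebroidStr R L) (A : Submodule R L)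
    (hA : ∀ a b : A, ((⁅(a : L), (b : L)⁆ : L) ∈ A))
    (conn : A → E → E)
    (hconn_add_left : ∀ (a b : A) (e : E), conn (a + b) e = conn a e + conn b e)
    (hconn_smul_left : ∀ (f : R) (a : A) (e : E), conn (f • a) e = f • conn a e)
    (hconn_add_right : ∀ (a : A) (e e' : E), conn a (e + e') = conn a e + conn a e')
    (hconn_leibniz : ∀ (a : A) (f : R) (e : E),
      conn a (f • e) = G.ρ (a : L) f • e + f • conn a e)
    (hconn_flat : ∀ (a b : A) (e : E),
      conn ⟨⁅(a : L), (b : L)⁆, hA a b⟩ e = conn a (conn b e) - conn b (conn a e))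
    (j : (L ⧸ A) →ₗ[R] L) (hj : ∀ b, A.mkQ (j b) = b) :
    -- ζ(e) is a section of the jet bundle extending the A-action:
    (∀ (e : E) (ε : Module.Dual R E) (a : A),
        Dzeta G A conn j hj e ε (a : L) = G.ρ (a : L) (ε e) - ε (conn a e)) ∧
    -- and ζ satisfies the asserted Leibniz-type formula:
    (∀ (f : R) (e : E),
        zetaJet G A conn j hj (f • e) =
          f • zetaJet G A conn j hj e +
            kappaJet (fun l => G.ρ (j (A.mkQ l)) f) e) := by
  have hsub : ∀ (x y : L) (f : R), G.ρ (x - y) f = G.ρ x f - G.ρ y f := by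
    intro x y f
    have h : G.ρ (-y) f = -G.ρ y f := by
      have := G.ρ_smul_left (-1 : R) y f
      simpa using this
    have := G.ρ_add_left x (-y) f
    simpa [sub_eq_add_neg, h] using this
  constructor
  · intro e ε a
    have hq : A.mkQ (a : L) = 0 := by
      simp [Submodule.mkQ_apply, Submodule.Quotient.mk_eq_zero, a.2]
    have harg : (⟨(a : L) - j (A.mkQ (a : L)), by
        have h1 : A.mkQ ((a : L) - j (A.mkQ (a : L))) = 0 := by
          rw [map_sub, hj, sub_self]
        rwa [Submodule.mkQ_apply, Submodule.Quotient.mk_eq_zero] at h1⟩ : A) = a := by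
      ext
      simp [hq]
    simp only [Dzeta, harg]
  · intro f e
    have key : Dzeta G A conn j hj (f • e) =
        f • Dzeta G A conn j hj e + (fun ε l => ε e * G.ρ (j (A.mkQ l)) f) := by
      funext ε l
      set a : A := ⟨l - j (A.mkQ l), by
        have h1 : A.mkQ (l - j (A.mkQ l)) = 0 := by rw [map_sub, hj, sub_self]
        rwa [Submodule.mkQ_apply, Submodule.Quotient.mk_eq_zero] at h1⟩ with ha
      have hρa : G.ρ (a : L) f = G.ρ l f - G.ρ (j (A.mkQ l)) f := hsub _ _ _
      show G.ρ l (ε (f • e)) - ε (conn a (f • e)) =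
          f * (G.ρ l (ε e) - ε (conn a e)) + ε e * G.ρ (j (A.mkQ l)) f
      rw [hconn_leibniz, map_smul, map_add, map_smul, map_smul]
      simp only [smul_eq_mul]
      rw [G.ρ_mul, hρa]
      ring
    have keysnd : f • e = f • e + (0 : E) := by simp
    simp only [zetaJet, Prod.smul_mk, kappaJet, Prod.mk_add_mk, Prod.mk.injEq]
    exact ⟨key, keysnd⟩

end
end

section
/- If φ: E → E' is an isomorphism of ρ(L₋)-modules between two generalized holomorphic vector bundles over a regular generalized complex manifold, then φ is an isomorphism of generalized holomorphic vector bundles; consequently, the natural map μ: Ext¹_{𝒪_M}(E₂, E₁) → Ext¹_𝒜(E₂, E₁) from generalized holomorphic extensions to extensions of ρ(L₋)-modules is injective. -/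
/-! STATEMENT 18: if `φ : E → E'` is an isomorphism of `ρ(L₋)`-modules between
two generalized holomorphic vector bundles over a regular generalized complex
manifold, then `φ` is an isomorphism of generalized holomorphic vector
bundles; consequently the natural map
`μ : Ext¹_{𝒪_M}(E₂, E₁) → Ext¹_𝒜(E₂, E₁)` is injective.

Model: `R` is the `ℂ`-algebra of smooth complex-valued functions; `V` models
the sections of `T_ℂM ⊕ T*_ℂM`, with its canonical pairing `P`; `d` sends a
function `f` to the 1-form `df`, viewed in `V`, so that the anchor of
`v ∈ V` acts on `f` by `ρ(v)f = P(v, df)`; `Lsub` models `L₋`, which is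
maximal isotropic.  A function `f` is generalized holomorphic iff `d₋f = 0`,
i.e. `P(l, df) = 0` for all `l ∈ L₋`; the key fact `ρ(l)f = (l, df) = (l, d₋f)`
is built into the model.  A generalized holomorphic vector bundle is an
`R`-module `E` together with its flat `ρ(L₋)`-connection `conn` and a frame
of generalized holomorphic sections (a basis `bE` of flat sections), and `φ`
is an isomorphism of generalized holomorphic vector bundles iff its matrix
entries in such frames are generalized holomorphic functions.  The second
part expresses the injectivity of `μ`: a `ρ(L₋)`-module isomorphism `φ`
between two extensions of `E₂` by `E₁` yields an equivalence of extensions in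
the generalized holomorphic category. -/
theorem module_iso_is_GH_iso_and_mu_injective
    (R : Type) [CommRing R] [Algebra ℂ R]
    (V : Type) [AddCommGroup V] [Module R V]
    (P : V →ₗ[R] V →ₗ[R] R)
    (d : R → V)
    (hd_add : ∀ f g, d (f + g) = d f + d g)
    (hd_mul : ∀ f g, d (f * g) = f • d g + g • d f)
    (Lsub : Submodule R V)
    (hiso : ∀ a ∈ Lsub, ∀ b ∈ Lsub, P a b = 0)
    (hmax : ∀ v : V, (∀ l ∈ Lsub, P l v = 0) → v ∈ Lsub)
    (n : ℕ)
    (E E' : Type) [AddCommGroup E] [Module R E] [AddCommGroup E'] [Module R E']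
    (conn : Lsub → E → E) (conn' : Lsub → E' → E')
    (hconn_add : ∀ (l : Lsub) (x y : E), conn l (x + y) = conn l x + conn l y)
    (hconn_leib : ∀ (l : Lsub) (f : R) (x : E),
      conn l (f • x) = P (l : V) (d f) • x + f • conn l x)
    (hconn'_add : ∀ (l : Lsub) (x y : E'), conn' l (x + y) = conn' l x + conn' l y)
    (hconn'_leib : ∀ (l : Lsub) (f : R) (x : E'),
      conn' l (f • x) = P (l : V) (d f) • x + f • conn' l x)
    -- frames of generalized holomorphic sections:
    (bE : Module.Basis (Fin n) R E) (hbE : ∀ i l, conn l (bE i) = 0)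
    (bE' : Module.Basis (Fin n) R E') (hbE' : ∀ i l, conn' l (bE' i) = 0)
    -- φ is an isomorphism of ρ(L₋)-modules:
    (φ : E ≃ₗ[R] E') (hφ : ∀ (l : Lsub) (x : E), φ (conn l x) = conn' l (φ x)) :
    -- φ is an isomorphism of GH vector bundles: its matrix entries are GH functions
    (∀ i k, ∀ l ∈ Lsub, P l (d (bE'.repr (φ (bE i)) k)) = 0) ∧
    -- consequently μ is injective: module-isomorphic GH extensions of E₂ by E₁
    -- are isomorphic as GH extensions
    (∀ (E₁ E₂ : Type) [AddCommGroup E₁] [Module R E₁] [AddCommGroup E₂] [Module R E₂]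
      (ι₁ : E₁ →ₗ[R] E) (p₁ : E →ₗ[R] E₂) (ι₁' : E₁ →ₗ[R] E') (p₁' : E' →ₗ[R] E₂),
      (∀ x, φ (ι₁ x) = ι₁' x) → (∀ y, p₁' (φ y) = p₁ y) →
      ∃ ψ : E ≃ₗ[R] E',
        (∀ (l : Lsub) (x : E), ψ (conn l x) = conn' l (ψ x)) ∧
        (∀ x, ψ (ι₁ x) = ι₁' x) ∧ (∀ y, p₁' (ψ y) = p₁ y) ∧
        (∀ i k, ∀ l ∈ Lsub, P l (d (bE'.repr (ψ (bE i)) k)) = 0)) := by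

  have key : ∀ i k, ∀ l ∈ Lsub, P l (d (bE'.repr (φ (bE i)) k)) = 0 := by
    intro i k l hl
    set lsub : Lsub := ⟨l, hl⟩ with hlsub
    have h0 : conn' lsub 0 = 0 := by
      have h := hconn'_add lsub 0 0
      rw [add_zero] at h
      exact (left_eq_add.mp h)
    have hsum : ∀ (s : Finset (Fin n)) (f : Fin n → R),
        conn' lsub (∑ j ∈ s, f j • bE' j) = ∑ j ∈ s, P l (d (f j)) • bE' j := by
      intro s f
      induction s using Finset.induction with
      | empty => simpa using h0
      | insert _ _ hj ih =>
        rw [Finset.sum_insert hj, Finset.sum_insert hj, hconn'_add,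
          hconn'_leib, hbE', smul_zero, add_zero, ih]
    have hrep : φ (bE i) = ∑ j, bE'.repr (φ (bE i)) j • bE' j :=
      (bE'.sum_repr _).symm
    have hzero : (∑ j, P l (d (bE'.repr (φ (bE i)) j)) • bE' j) = 0 := by
      rw [← hsum, ← hrep, ← hφ, hbE, map_zero]
    have := congrArg (fun x => bE'.repr x k) hzero
    simp only [map_sum, map_smul, Module.Basis.repr_self, map_zero] at this
    simpa [Finsupp.smul_single, Finsupp.single_apply, Finset.sum_ite_eq']
      using this
  refine ⟨key, ?_⟩
  intro E₁ E₂ _ _ _ _ ι₁ p₁ ι₁' p₁' hι hp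
  exact ⟨φ, hφ, hι, hp, key⟩
end
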